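/- Behrstock inequality for quasiconvex subsets: let X be a δ-hyperbolic geodesic space and let V, W be K-quasiconvex subsets such that the closest-point projection π_V(W) has diameter at most B and π_W(V) has diameter at most B. Then there is a constant κ = κ(δ, K, B) such that for every x ∈ X, min( diam(π_W(x) ∪ π_W(V)), diam(π_V(x) ∪ π_V(W)) ) ≤ κ. -/
import Mathlib


/-- `γ` is a (unit-speed) geodesic from `a` to `b`, parametrised on `[0, dist a b]`. -/
def IsGeodesicFrom {X : Type*} [MetricSpace X] (γ : ℝ → X) (a b : X) : Prop :=
  γ 0 = a ∧ γ (dist a b) = b ∧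
    ∀ s ∈ Set.Icc (0:ℝ) (dist a b), ∀ t ∈ Set.Icc (0:ℝ) (dist a b),
      dist (γ s) (γ t) = |s - t|

/-- The image of the geodesic `γ` from `a` to `b`. -/
def geodSeg {X : Type*} [MetricSpace X] (γ : ℝ → X) (a b : X) : Set X :=
  γ '' Set.Icc (0:ℝ) (dist a b)

/-- Any two points are joined by a geodesic. -/
def GeodesicMetricSpace (X : Type*) [MetricSpace X] : Prop :=
  ∀ a b : X, ∃ γ : ℝ → X, IsGeodesicFrom γ a b

/-- `δ`-hyperbolicity via thin triangles: each side of a geodesic triangle is contained in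
the `δ`-neighbourhood of the union of the other two sides. -/
def ThinTriangles (X : Type*) [MetricSpace X] (δ : ℝ) : Prop :=
  ∀ a b c : X, ∀ γ₁ γ₂ γ₃ : ℝ → X,
    IsGeodesicFrom γ₁ a b → IsGeodesicFrom γ₂ b c → IsGeodesicFrom γ₃ c a →
    ∀ p ∈ geodSeg γ₁ a b, ∃ q ∈ geodSeg γ₂ b c ∪ geodSeg γ₃ c a, dist p q ≤ δ

/-- The coarse closest-point projection of `x` to `Q`. -/
noncomputable def projSet {X : Type*} [MetricSpace X] (Q : Set X) (x : X) : Set X :=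
  {q ∈ Q | dist x q ≤ Metric.infDist x Q + 1}

/-- `Q` is `K`-quasiconvex: geodesics between points of `Q` stay in the `K`-neighbourhood. -/
def QuasiconvexSet {X : Type*} [MetricSpace X] (K : ℝ) (Q : Set X) : Prop :=
  ∀ a ∈ Q, ∀ b ∈ Q, ∀ γ : ℝ → X, IsGeodesicFrom γ a b →
    ∀ p ∈ geodSeg γ a b, Metric.infDist p Q ≤ K

/-- The infimal distance between two subsets of a metric space. -/
noncomputable def setDist {X : Type*} [MetricSpace X] (A B : Set X) : ℝ :=
  sInf (Set.image2 dist A B)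

open Metric Set

section Aux
variable {X : Type} [MetricSpace X]

lemma projSet_nonempty {Q : Set X} (hQ : Q.Nonempty) (x : X) : (projSet Q x).Nonempty := by
  obtain ⟨q, hq, h⟩ := (infDist_lt_iff hQ).1 (lt_add_of_pos_right (infDist x Q) one_pos)
  exact ⟨q, hq, h.le⟩

lemma geod_mem {γ : ℝ → X} {a b : X} (_h : IsGeodesicFrom γ a b) {t : ℝ}
    (ht : t ∈ Set.Icc (0:ℝ) (dist a b)) : γ t ∈ geodSeg γ a b := ⟨t, ht, rfl⟩

lemma geod_dist_from {γ : ℝ → X} {a b : X} (h : IsGeodesicFrom γ a b) {t : ℝ}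
    (ht : t ∈ Set.Icc (0:ℝ) (dist a b)) : dist a (γ t) = t := by
  have h0 : (0:ℝ) ∈ Set.Icc (0:ℝ) (dist a b) := ⟨le_refl _, dist_nonneg⟩
  have := h.2.2 0 h0 t ht
  rw [h.1] at this
  rw [this, abs_of_nonpos (by linarith [ht.1])]
  linarith

lemma geod_dist_to {γ : ℝ → X} {a b : X} (h : IsGeodesicFrom γ a b) {t : ℝ}
    (ht : t ∈ Set.Icc (0:ℝ) (dist a b)) : dist (γ t) b = dist a b - t := by
  have hD : dist a b ∈ Set.Icc (0:ℝ) (dist a b) := ⟨dist_nonneg, le_refl _⟩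
  have := h.2.2 t ht (dist a b) hD
  rw [h.2.1] at this
  rw [this, abs_of_nonpos (by linarith [ht.2])]
  ring

lemma geod_continuousOn {γ : ℝ → X} {a b : X} (h : IsGeodesicFrom γ a b) :
    ContinuousOn γ (Set.Icc (0:ℝ) (dist a b)) := by
  apply LipschitzOnWith.continuousOn (K := 1)
  apply LipschitzOnWith.of_dist_le_mul
  intro s hs t ht
  rw [h.2.2 s hs t ht, Real.dist_eq, NNReal.coe_one, one_mul]

lemma geod_compact {γ : ℝ → X} {a b : X} (h : IsGeodesicFrom γ a b) :
    IsCompact (geodSeg γ a b) :=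
  isCompact_Icc.image_of_continuousOn (geod_continuousOn h)

/-- Lemma A: a geodesic from `x` to a point `q ∈ Q` passes within `3δ+K+1`
of any coarse projection `u` of `x` to `Q`. -/
lemma lemA {δ K : ℝ} (hδ : 0 ≤ δ) (hK : 0 ≤ K)
    (hgeo : GeodesicMetricSpace X) (hthin : ThinTriangles X δ)
    {Q : Set X} (hconv : QuasiconvexSet K Q) (hQne : Q.Nonempty)
    {x q u : X} (hq : q ∈ Q) (hu : u ∈ projSet Q x)
    {γ : ℝ → X} (hγ : IsGeodesicFrom γ x q) :
    ∃ t ∈ Set.Icc (0:ℝ) (dist x q), dist (γ t) u ≤ 3*δ + K + 1 := by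
  obtain ⟨huQ, hud⟩ := hu
  obtain ⟨σ, hσ⟩ := hgeo q u
  obtain ⟨τ, hτ⟩ := hgeo u x
  set A := geodSeg τ u x with hA
  set Bs := geodSeg σ q u with hBs
  have hAcomp : IsCompact A := geod_compact hτ
  have hxA : x ∈ A := by
    have := geod_mem hτ (⟨dist_nonneg, le_refl _⟩ : dist u x ∈ Set.Icc (0:ℝ) (dist u x))
    rwa [hτ.2.1] at this
  have hAne : A.Nonempty := ⟨x, hxA⟩
  set S := {t : ℝ | t ∈ Set.Icc (0:ℝ) (dist x q) ∧ infDist (γ t) A ≤ δ} with hS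
  have h0S : (0:ℝ) ∈ S := by
    refine ⟨⟨le_refl _, dist_nonneg⟩, ?_⟩
    rw [hγ.1, infDist_zero_of_mem hxA]; exact hδ
  have hSne : S.Nonempty := ⟨0, h0S⟩
  have hSbdd : BddAbove S := ⟨dist x q, fun t ht => ht.1.2⟩
  set t₀ := sSup S with ht₀
  have ht₀0 : 0 ≤ t₀ := le_csSup hSbdd h0S
  have ht₀end : t₀ ≤ dist x q := csSup_le hSne (fun t ht => ht.1.2)
  have ht₀I : t₀ ∈ Set.Icc (0:ℝ) (dist x q) := ⟨ht₀0, ht₀end⟩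
  -- the sup point is still δ-close to side A
  have hfA : infDist (γ t₀) A ≤ δ := by
    refine le_of_forall_pos_le_add (fun ε hε => ?_)
    obtain ⟨t, htS, hlt⟩ := exists_lt_of_lt_csSup hSne (show t₀ - ε < t₀ by linarith)
    have htle : t ≤ t₀ := le_csSup hSbdd htS
    calc infDist (γ t₀) A ≤ infDist (γ t) A + dist (γ t₀) (γ t) :=
          infDist_le_infDist_add_dist
      _ ≤ δ + ε := by
          rw [hγ.2.2 t₀ ht₀I t htS.1, abs_of_nonneg (by linarith)]
          linarith [htS.2]
  obtain ⟨y, hyA, hyd⟩ := hAcomp.exists_infDist_eq_dist hAne (γ t₀)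
  have hy : dist (γ t₀) y ≤ δ := by rw [← hyd]; exact hfA
  obtain ⟨r, hrI, hyr⟩ := hyA
  have huy : dist u y = r := by rw [← hyr]; exact geod_dist_from hτ hrI
  have hyx : dist y x = dist u x - r := by rw [← hyr]; exact geod_dist_to hτ hrI
  rcases eq_or_lt_of_le ht₀end with hEq | hLt
  · -- t₀ = dist x q : the endpoint q is close to side [u,x]
    have hq' : γ t₀ = q := by rw [hEq, hγ.2.1]
    have h1 : dist x u ≤ dist x y + δ + 1 := by
      have c1 : dist x u ≤ infDist x Q + 1 := hud
      have c2 : infDist x Q ≤ dist x q := infDist_le_dist_of_mem hq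
      have c3 : dist x q ≤ dist x y + dist y q := dist_triangle x y q
      have c4 : dist y q ≤ δ := by rw [← hq', dist_comm]; exact hy
      linarith
    have hr1 : r ≤ δ + 1 := by
      have : dist x y = dist u x - r := by rw [dist_comm]; exact hyx
      rw [dist_comm x u] at h1
      linarith [this ▸ h1]
    refine ⟨t₀, ht₀I, ?_⟩
    calc dist (γ t₀) u ≤ dist (γ t₀) y + dist y u := dist_triangle _ _ _
      _ ≤ δ + r := by rw [dist_comm y u, huy]; linarith
      _ ≤ 3*δ + K + 1 := by linarith
  · -- t₀ < dist x q : the sup point is also close to side [q,u]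
    have hBne : Bs.Nonempty := ⟨q, by
      have := geod_mem hσ (⟨le_refl _, dist_nonneg⟩ : (0:ℝ) ∈ Set.Icc (0:ℝ) (dist q u))
      rwa [hσ.1] at this⟩
    have hgB : infDist (γ t₀) Bs ≤ δ := by
      refine le_of_forall_pos_le_add (fun ε hε => ?_)
      set t := min (t₀ + ε) (dist x q) with htdef
      have htgt : t₀ < t := lt_min (by linarith) hLt
      have htI : t ∈ Set.Icc (0:ℝ) (dist x q) := ⟨by linarith, min_le_right _ _⟩
      have htnS : t ∉ S := fun h => absurd (le_csSup hSbdd h) (not_le.2 htgt)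
      have hfar : ¬ infDist (γ t) A ≤ δ := fun h => htnS ⟨htI, h⟩
      obtain ⟨q', hq', hdq'⟩ := hthin x q u γ σ τ hγ hσ hτ (γ t) (geod_mem hγ htI)
      have hq'B : q' ∈ Bs := by
        rcases hq' with h | h
        · exact h
        · exact absurd (le_trans (infDist_le_dist_of_mem h) hdq') hfar
      calc infDist (γ t₀) Bs ≤ infDist (γ t) Bs + dist (γ t₀) (γ t) :=
            infDist_le_infDist_add_dist
        _ ≤ δ + ε := by
            have h1 : infDist (γ t) Bs ≤ δ := le_trans (infDist_le_dist_of_mem hq'B) hdq'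
            have h2 : dist (γ t₀) (γ t) ≤ ε := by
              rw [hγ.2.2 t₀ ht₀I t htI, abs_of_nonpos (by linarith)]
              have : t ≤ t₀ + ε := min_le_left _ _
              linarith
            linarith
    refine ⟨t₀, ht₀I, le_of_forall_pos_le_add (fun ε hε => ?_)⟩
    obtain ⟨z, hzB, hz⟩ := (infDist_lt_iff hBne).1
      (show infDist (γ t₀) Bs < δ + ε/2 by linarith)
    have hzQ : infDist z Q ≤ K := hconv q hq u huQ σ hσ z hzB
    obtain ⟨q₁, hq₁Q, hq₁⟩ := (infDist_lt_iff hQne).1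
      (show infDist z Q < K + ε/2 by linarith)
    have e1 : dist x (γ t₀) = t₀ := geod_dist_from hγ ht₀I
    have e2 : dist x u ≤ t₀ + δ + K + ε + 1 := by
      have c1 : dist x u ≤ infDist x Q + 1 := hud
      have c2 : infDist x Q ≤ dist x q₁ := infDist_le_dist_of_mem hq₁Q
      have c3 : dist x q₁ ≤ dist x (γ t₀) + dist (γ t₀) z + dist z q₁ :=
        dist_triangle4 x (γ t₀) z q₁
      linarith
    have e3 : t₀ - δ ≤ dist x y := by
      have := dist_triangle x y (γ t₀)
      have h' : dist y (γ t₀) ≤ δ := by rw [dist_comm]; exact hy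
      linarith [e1 ▸ this]
    have e5 : r ≤ 2*δ + K + ε + 1 := by
      have h4 : dist x y = dist u x - r := by rw [dist_comm]; exact hyx
      rw [dist_comm x u] at e2
      linarith
    calc dist (γ t₀) u ≤ dist (γ t₀) y + dist y u := dist_triangle _ _ _
      _ ≤ δ + r := by rw [dist_comm y u, huy]; linarith
      _ ≤ 3*δ + K + 1 + ε := by linarith

end Aux

section Aux2
variable {X : Type} [MetricSpace X]
open Metric Set

/-- Reverse triangle inequality through the projection. -/
lemma lemA' {δ K : ℝ} (hδ : 0 ≤ δ) (hK : 0 ≤ K)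
    (hgeo : GeodesicMetricSpace X) (hthin : ThinTriangles X δ)
    {Q : Set X} (hconv : QuasiconvexSet K Q) (hQne : Q.Nonempty)
    {x q u : X} (hq : q ∈ Q) (hu : u ∈ projSet Q x) :
    dist x u + dist u q ≤ dist x q + 2*(3*δ + K + 1) := by
  obtain ⟨γ, hγ⟩ := hgeo x q
  obtain ⟨t, htI, ht⟩ := lemA hδ hK hgeo hthin hconv hQne hq hu hγ
  have e1 : dist x (γ t) = t := geod_dist_from hγ htI
  have e2 : dist (γ t) q = dist x q - t := geod_dist_to hγ htI
  have c1 : dist x u ≤ dist x (γ t) + dist (γ t) u := dist_triangle _ _ _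
  have c2 : dist u q ≤ dist u (γ t) + dist (γ t) q := dist_triangle _ _ _
  rw [dist_comm u (γ t)] at c2
  linarith

/-- Coarse projections to a quasiconvex set are coarsely 2-Lipschitz. -/
lemma lemE {δ K : ℝ} (hδ : 0 ≤ δ) (hK : 0 ≤ K)
    (hgeo : GeodesicMetricSpace X) (hthin : ThinTriangles X δ)
    {Q : Set X} (hconv : QuasiconvexSet K Q) (hQne : Q.Nonempty)
    {a b ua ub : X} (ha : ua ∈ projSet Q a) (hb : ub ∈ projSet Q b) :
    dist ua ub ≤ 2 * dist a b + 2*(3*δ + K + 1) + 1 := by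
  have h := lemA' hδ hK hgeo hthin hconv hQne hb.1 ha
  have h2 : dist a ub ≤ 2 * dist a b + dist a ua + 1 := by
    have c1 : dist a ub ≤ dist a b + dist b ub := dist_triangle _ _ _
    have c2 : dist b ub ≤ infDist b Q + 1 := hb.2
    have c3 : infDist b Q ≤ infDist a Q + dist b a := infDist_le_infDist_add_dist
    have c4 : infDist a Q ≤ dist a ua := infDist_le_dist_of_mem ha.1
    rw [dist_comm b a] at c3
    linarith
  linarith

/-- Stability: projection of a point on a geodesic `[x,q]`, `q ∈ Q`, before the
entry time, is close to the projection of `x`. -/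
lemma lemD {δ K : ℝ} (hδ : 0 ≤ δ) (hK : 0 ≤ K)
    (hgeo : GeodesicMetricSpace X) (hthin : ThinTriangles X δ)
    {Q : Set X} (hconv : QuasiconvexSet K Q) (hQne : Q.Nonempty)
    {x q u u' : X} {γ : ℝ → X} (hq : q ∈ Q) (hγ : IsGeodesicFrom γ x q)
    {s : ℝ} (hsI : s ∈ Set.Icc (0:ℝ) (dist x q))
    (hs : s ≤ infDist x Q - (3*δ + K + 1))
    (hu : u ∈ projSet Q x) (hu' : u' ∈ projSet Q (γ s)) :
    dist u u' ≤ 6*(3*δ + K + 1) + 2 := by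
  set D := 3*δ + K + 1 with hD
  have hD0 : 0 ≤ D := by rw [hD]; linarith
  set m := γ s with hm
  have hdm : dist x m = s := geod_dist_from hγ hsI
  have hmq : dist m q = dist x q - s := geod_dist_to hγ hsI
  have hγ' : IsGeodesicFrom (fun r => γ (s + r)) m q := by
    refine ⟨by simp [hm], ?_, ?_⟩
    · show γ (s + dist m q) = q
      rw [hmq, add_sub_cancel]; exact hγ.2.1
    · intro r hr r' hr'
      have h1 : s + r ∈ Set.Icc (0:ℝ) (dist x q) := by
        constructor
        · linarith [hsI.1, hr.1]
        · have := hr.2; rw [hmq] at this; linarith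
      have h1' : s + r' ∈ Set.Icc (0:ℝ) (dist x q) := by
        constructor
        · linarith [hsI.1, hr'.1]
        · have := hr'.2; rw [hmq] at this; linarith
      rw [hγ.2.2 (s+r) h1 (s+r') h1']
      congr 1; ring
  obtain ⟨r, hrI, hr⟩ := lemA hδ hK hgeo hthin hconv hQne hq hu' hγ'
  obtain ⟨t₀, ht₀I, ht₀⟩ := lemA hδ hK hgeo hthin hconv hQne hq hu hγ
  set t₁ := s + r with ht₁
  have ht₁I : t₁ ∈ Set.Icc (0:ℝ) (dist x q) := by
    constructor
    · linarith [hsI.1, hrI.1]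
    · have := hrI.2; rw [hmq] at this; linarith
  set I := infDist x Q with hI
  have hIu1 : I ≤ dist x u := infDist_le_dist_of_mem hu.1
  have hIu2 : dist x u ≤ I + 1 := hu.2
  -- bounds on t₀
  have et₀ : dist x (γ t₀) = t₀ := geod_dist_from hγ ht₀I
  have ht₀lb : I - D ≤ t₀ := by
    have := dist_triangle x (γ t₀) u
    rw [et₀] at this; linarith
  have ht₀ub : t₀ ≤ I + 1 + D := by
    have := dist_triangle x u (γ t₀)
    rw [dist_comm u (γ t₀)] at this
    rw [← et₀]; linarith
  -- bounds on t₁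
  have hmI1 : I - s ≤ infDist m Q := by
    have : I ≤ infDist m Q + dist x m := infDist_le_infDist_add_dist
    rw [hdm] at this; linarith
  have emr : dist m (γ t₁) = r := geod_dist_from hγ' hrI
  have hmu' : infDist m Q ≤ dist m u' := infDist_le_dist_of_mem hu'.1
  have hmu'2 : dist m u' ≤ infDist m Q + 1 := hu'.2
  have ht₁lb : I - D ≤ t₁ := by
    have c := dist_triangle m (γ t₁) u'
    rw [emr] at c
    rw [ht₁]; linarith
  have hst₀ : s ≤ t₀ := by linarith
  have hmQub : infDist m Q ≤ t₀ - s + D := by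
    have c1 : infDist m Q ≤ dist m u := infDist_le_dist_of_mem hu.1
    have c2 : dist m u ≤ dist m (γ t₀) + dist (γ t₀) u := dist_triangle _ _ _
    have c3 : dist m (γ t₀) = t₀ - s := by
      rw [hm, hγ.2.2 s hsI t₀ ht₀I, abs_of_nonpos (by linarith)]; ring
    linarith
  have ht₁ub : t₁ ≤ I + 3*D + 2 := by
    have c : dist m (γ t₁) ≤ dist m u' + dist (γ t₁) u' := by
      rw [dist_comm (γ t₁) u']; exact dist_triangle m u' (γ t₁)
    rw [emr] at c
    have hrD : dist (γ t₁) u' ≤ D := by rw [hD]; exact hr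
    rw [ht₁]; linarith
  have habs : dist (γ t₀) (γ t₁) ≤ 4*D + 2 := by
    rw [hγ.2.2 t₀ ht₀I t₁ ht₁I]
    rw [abs_sub_le_iff]
    constructor <;> linarith
  calc dist u u' ≤ dist u (γ t₀) + dist (γ t₀) (γ t₁) + dist (γ t₁) u' :=
        dist_triangle4 _ _ _ _
    _ ≤ 6*(3*δ + K + 1) + 2 := by
        rw [dist_comm u (γ t₀)]
        have h1 : dist (γ t₁) u' ≤ D := by rw [hD]; exact hr
        rw [hD] at *; linarith
end Aux2

section Final
variable {X : Type} [MetricSpace X]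
open Metric Set

/-- Behrstock dichotomy: either `w` (a projection of `x` to `W`) is close to `π_W(V)`,
or `p` (a projection of `x` to `V`) is close to `π_V(W)`. -/
lemma lemF {δ K : ℝ} (hδ : 0 ≤ δ) (hK : 0 ≤ K)
    (hgeo : GeodesicMetricSpace X) (hthin : ThinTriangles X δ)
    {V W : Set X} (hVne : V.Nonempty) (hWne : W.Nonempty)
    (hV : QuasiconvexSet K V) (hW : QuasiconvexSet K W)
    {x p w : X} (hp : p ∈ projSet V x) (hw : w ∈ projSet W x) :
    (∃ w₁ ∈ ⋃ v ∈ V, projSet W v, dist w w₁ ≤ 10*(3*δ+K+1) + 2*δ + 3) ∨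
    (∃ v₁ ∈ ⋃ w' ∈ W, projSet V w', dist p v₁ ≤ 10*(3*δ+K+1) + 2*δ + 3) := by
  set D := 3*δ + K + 1 with hD
  have hD0 : 0 ≤ D := by rw [hD]; linarith
  obtain ⟨w', hw'⟩ := projSet_nonempty hWne p
  obtain ⟨γ₁, hγ₁⟩ := hgeo p w
  obtain ⟨γ₂, hγ₂⟩ := hgeo w x
  obtain ⟨γ₃, hγ₃⟩ := hgeo x p
  -- the geodesic [p,w] passes close to w'
  obtain ⟨tm, htmI, htm⟩ := lemA hδ hK hgeo hthin hW hWne hw.1 hw' hγ₁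
  set m := γ₁ tm with hm
  have htmD : dist m w' ≤ D := by rw [hD]; exact htm
  obtain ⟨q', hq', hmq'⟩ := hthin p w x γ₁ γ₂ γ₃ hγ₁ hγ₂ hγ₃ m (geod_mem hγ₁ htmI)
  rcases hq' with hz | hy
  · -- q' lies on [w,x] : w is close to π_W(V)
    left
    obtain ⟨t', ht'I, hzt⟩ := hz
    have ewz : dist w q' = t' := by rw [← hzt]; exact geod_dist_from hγ₂ ht'I
    have ezx : dist q' x = dist w x - t' := by rw [← hzt]; exact geod_dist_to hγ₂ ht'I
    have c1 : dist x w ≤ infDist x W + 1 := hw.2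
    have c2 : infDist x W ≤ dist x w' := infDist_le_dist_of_mem hw'.1
    have c3 : dist x w' ≤ dist x q' + dist q' m + dist m w' := dist_triangle4 _ _ _ _
    have c4 : dist q' m ≤ δ := by rw [dist_comm]; exact hmq'
    have c5 : dist x q' = dist w x - t' := by rw [dist_comm]; exact ezx
    have c6 : dist x w = dist w x := dist_comm x w
    have ht'ub : t' ≤ δ + D + 1 := by linarith
    have : dist w w' ≤ 2*δ + 2*D + 1 := by
      have := dist_triangle4 w q' m w'
      linarith [ewz ▸ this]
    refine ⟨w', ?_, by rw [hD] at this ⊢; linarith⟩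
    exact Set.mem_biUnion hp.1 hw'
  · -- q' lies on [x,p]
    right
    obtain ⟨s, hsI, hys⟩ := hy
    have hyw' : dist q' w' ≤ δ + D := by
      have := dist_triangle q' m w'
      have h' : dist q' m ≤ δ := by rw [dist_comm]; exact hmq'
      linarith
    by_cases hcase : s ≤ infDist x V - D
    · -- before the entry point: use stability lemma
      obtain ⟨vy, hvy⟩ := projSet_nonempty hVne (γ₃ s)
      have hpd : dist p vy ≤ 6*D + 2 := by
        have := lemD hδ hK hgeo hthin hV hVne hp.1 hγ₃ hsI (by rw [hD] at hcase; exact hcase) hp hvy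
        rw [hD]; exact this
      obtain ⟨v₁, hv₁⟩ := projSet_nonempty hVne w'
      have hLip : dist vy v₁ ≤ 2 * dist (γ₃ s) w' + 2*D + 1 := by
        have := lemE hδ hK hgeo hthin hV hVne hvy hv₁
        rw [hD]; exact this
      have hyd : dist (γ₃ s) w' ≤ δ + D := by rw [hys]; exact hyw'
      have : dist p v₁ ≤ 10*D + 2*δ + 3 := by
        have := dist_triangle p vy v₁
        linarith
      refine ⟨v₁, Set.mem_biUnion hw'.1 hv₁, by rw [hD] at this ⊢; linarith⟩
    · -- after the entry point: p itself is close to W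
      push_neg at hcase
      have eyp : dist q' p = dist x p - s := by rw [← hys]; exact geod_dist_to hγ₃ hsI
      have hxp : dist x p ≤ infDist x V + 1 := hp.2
      have hyp : dist q' p ≤ D + 1 := by rw [eyp]; linarith
      have hpw' : dist p w' ≤ δ + 2*D + 1 := by
        have := dist_triangle p q' w'
        rw [dist_comm p q'] at this
        linarith
      have hpp : p ∈ projSet V p := by
        refine ⟨hp.1, ?_⟩
        rw [dist_self]
        have := infDist_nonneg (s := V) (x := p)
        linarith
      obtain ⟨v₁, hv₁⟩ := projSet_nonempty hVne w'
      have hLip : dist p v₁ ≤ 2 * dist p w' + 2*D + 1 := by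
        have := lemE hδ hK hgeo hthin hV hVne hpp hv₁
        rw [hD]; exact this
      have : dist p v₁ ≤ 10*D + 2*δ + 3 := by linarith
      exact ⟨v₁, Set.mem_biUnion hw'.1 hv₁, by rw [hD] at this ⊢; linarith⟩

end Final


/-- Behrstock inequality for quasiconvex subsets of a hyperbolic space: if the mutual
coarse projections of `V` and `W` have diameter at most `B`, then every point projects
close to the projection of the other set in at least one of the two. -/
theorem stmt3 (δ K B : ℝ) (hδ : 0 ≤ δ) (hK : 0 ≤ K) (hB : 0 ≤ B) :
    ∃ κ : ℝ, ∀ (X : Type) [inst : MetricSpace X], GeodesicMetricSpace X → ThinTriangles X δ →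
      ∀ V W : Set X, V.Nonempty → W.Nonempty →
        QuasiconvexSet K V → QuasiconvexSet K W →
        Metric.diam (⋃ w ∈ W, projSet V w) ≤ B →
        Metric.diam (⋃ v ∈ V, projSet W v) ≤ B →
        ∀ x : X,
          min (Metric.diam (projSet W x ∪ ⋃ v ∈ V, projSet W v))
              (Metric.diam (projSet V x ∪ ⋃ w ∈ W, projSet V w)) ≤ κ := by
  classical
  refine ⟨B + 12*(3*δ+K+1) + 2*δ + 4, ?_⟩
  intro X _ hgeo hthin V W hVne hWne hV hW hBV hBW x
  obtain ⟨p, hp⟩ := projSet_nonempty hVne x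
  obtain ⟨w, hw⟩ := projSet_nonempty hWne x
  have hdiamW : Metric.diam (projSet W x) ≤ 2*(3*δ+K+1) + 1 := by
    refine Metric.diam_le_of_forall_dist_le (by linarith) (fun a ha b hb => ?_)
    have := lemE hδ hK hgeo hthin hW hWne ha hb
    simp only [dist_self] at this
    linarith
  have hdiamV : Metric.diam (projSet V x) ≤ 2*(3*δ+K+1) + 1 := by
    refine Metric.diam_le_of_forall_dist_le (by linarith) (fun a ha b hb => ?_)
    have := lemE hδ hK hgeo hthin hV hVne ha hb
    simp only [dist_self] at this
    linarith
  rcases lemF hδ hK hgeo hthin hVne hWne hV hW hp hw with ⟨w₁, hw₁m, hw₁⟩ | ⟨v₁, hv₁m, hv₁⟩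
  · refine min_le_of_left_le ?_
    calc Metric.diam (projSet W x ∪ ⋃ v ∈ V, projSet W v)
        ≤ Metric.diam (projSet W x) + dist w w₁ + Metric.diam (⋃ v ∈ V, projSet W v) :=
          Metric.diam_union hw hw₁m
      _ ≤ B + 12*(3*δ+K+1) + 2*δ + 4 := by linarith
  · refine min_le_of_right_le ?_
    calc Metric.diam (projSet V x ∪ ⋃ w' ∈ W, projSet V w')
        ≤ Metric.diam (projSet V x) + dist p v₁ + Metric.diam (⋃ w' ∈ W, projSet V w') :=
          Metric.diam_union hp hv₁m
      _ ≤ B + 12*(3*δ+K+1) + 2*δ + 4 := by linarith
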